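/- arXiv:2103.04904 — 5 statements merged into one kernel-verified Lean document; each statement's English description precedes it below -/
import Mathlib

section
/- Let f be a real-valued concave function on {0,1,...,n} (i.e., f(i)-f(i-1) ≥ f(i+1)-f(i) for 1 ≤ i ≤ n-1). Suppose points A < B < C in {0,...,n} with k = B - A and ℓ = C - B, and assume that for k - s of the consecutive difference steps j between A and B we have f(j+1) - f(j) ≤ f(j) - f(j-1) - 1 (strong concavity at those steps). Then (f(B) - f(A))/k ≥ (f(C) - f(B))/ℓ + (k-s)/k. -/
/-- Strengthened discrete concavity (Lemma concave, part c): if `k - s` of the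
`k` difference steps between `A` and `B` are strong (extra gap 1), then
`(f B - f A)/k ≥ (f C - f B)/ℓ + (k - s)/k`. -/
theorem stmt_1 (n : ℕ) (f : ℕ → ℝ)
    (hconc : ∀ i : ℕ, 1 ≤ i → i + 1 ≤ n → f i - f (i - 1) ≥ f (i + 1) - f i)
    (A B C : ℕ) (hAB : A < B) (hBC : B < C) (hCn : C ≤ n)
    (k ℓ s : ℕ) (hk : k = B - A) (hℓ : ℓ = C - B) (hs : s ≤ k)
    (S : Finset ℕ) (hS : S ⊆ Finset.Ioc A B) (hcard : S.card = k - s)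
    (hstrong : ∀ j ∈ S, f (j + 1) - f j ≤ f j - f (j - 1) - 1) :
    (f B - f A) / k ≥ (f C - f B) / ℓ + ((k : ℝ) - s) / k := by
  set D : ℝ := f (B + 1) - f B with hD
  -- count of strong steps at or above i
  set c : ℕ → ℕ := fun i => (S.filter (fun j => i ≤ j)).card with hc
  -- telescoping sums
  have tele : ∀ P Q : ℕ, P ≤ Q → ∑ i ∈ Finset.Ioc P Q, (f i - f (i - 1)) = f Q - f P := by
    intro P Q hPQ
    induction Q, hPQ using Nat.le_induction with
    | base => simp
    | succ Q hPQ ih =>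
        rw [Finset.sum_Ioc_succ_top hPQ, ih]
        simp only [Nat.add_sub_cancel]
        ring
  -- upper bound on later differences
  have up : ∀ i, B + 1 ≤ i → i ≤ n → f i - f (i - 1) ≤ D := by
    intro i hi hin
    induction i, hi using Nat.le_induction with
    | base => simp [hD]
    | succ i hi ih =>
        have h1 := hconc i (by omega) (by omega)
        have h2 := ih (by omega)
        have h3 : (i + 1) - 1 = i := by omega
        rw [h3]
        linarith
  -- lower bound on earlier differences, with strong-step counting
  have key : ∀ m : ℕ, ∀ i, i + m = B → A < i →
      f i - f (i - 1) ≥ D + (c i : ℝ) := by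
    intro m
    induction m with
    | zero =>
        intro i hi hAi
        have hiB : i = B := by omega
        subst hiB
        have hcB : c i ≤ 1 := by
          have hsub : S.filter (fun j => i ≤ j) ⊆ {i} := by
            intro j hj
            simp only [Finset.mem_filter] at hj
            have hji := hS hj.1
            simp only [Finset.mem_Ioc] at hji
            simp only [Finset.mem_singleton]
            omega
          simpa [hc] using Finset.card_le_card hsub
        have hcon := hconc i (by omega) (by omega)
        by_cases hmem : i ∈ S
        · have hst := hstrong i hmem
          have hcR : (c i : ℝ) ≤ 1 := by exact_mod_cast hcB
          simp only [hD]
          linarith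
        · have hc0 : c i = 0 := by
            rw [hc]
            simp only [Finset.card_eq_zero]
            apply Finset.filter_eq_empty_iff.mpr
            intro j hj
            have hji := hS hj
            simp only [Finset.mem_Ioc] at hji
            intro hle
            have hji2 : j = i := by omega
            exact hmem (hji2 ▸ hj)
          rw [hc0]
          simp only [hD]
          push_cast
          linarith
    | succ m ih =>
        intro i hi hAi
        have hiB : i < B := by omega
        have hihi := ih (i + 1) (by omega) (by omega)
        have hcon := hconc i (by omega) (by omega)
        simp only [Nat.add_sub_cancel] at hihi
        by_cases hmem : i ∈ S
        · -- c i ≤ c (i+1) + 1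
          have hcc : c i ≤ c (i + 1) + 1 := by
            have hsub : S.filter (fun j => i ≤ j) ⊆
                (S.filter (fun j => i + 1 ≤ j)) ∪ {i} := by
              intro j hj
              simp only [Finset.mem_filter] at hj
              simp only [Finset.mem_union, Finset.mem_filter, Finset.mem_singleton]
              by_cases hji : j = i
              · exact Or.inr hji
              · exact Or.inl ⟨hj.1, by omega⟩
            calc c i ≤ ((S.filter (fun j => i + 1 ≤ j)) ∪ {i}).card :=
                  Finset.card_le_card hsub
              _ ≤ c (i + 1) + 1 := by
                  have hu := Finset.card_union_le (S.filter (fun j => i + 1 ≤ j)) {i}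
                  rw [Finset.card_singleton] at hu
                  exact hu
          have hst := hstrong i hmem
          have hccR : (c i : ℝ) ≤ (c (i + 1) : ℝ) + 1 := by exact_mod_cast hcc
          linarith
        · have hcc : c i ≤ c (i + 1) := by
            apply Finset.card_le_card
            intro j hj
            simp only [Finset.mem_filter] at hj ⊢
            refine ⟨hj.1, ?_⟩
            by_cases hji : j = i
            · exact absurd (hji ▸ hj.1) hmem
            · omega
          have hccR : (c i : ℝ) ≤ (c (i + 1) : ℝ) := by exact_mod_cast hcc
          linarith
  have keyi : ∀ i ∈ Finset.Ioc A B, f i - f (i - 1) ≥ D + (c i : ℝ) := by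
    intro i hi
    simp only [Finset.mem_Ioc] at hi
    exact key (B - i) i (by omega) hi.1
  -- lower bound on f B - f A
  have hBA : f B - f A ≥ (k : ℝ) * D + ((k : ℝ) - s) := by
    have h1 : f B - f A = ∑ i ∈ Finset.Ioc A B, (f i - f (i - 1)) :=
      (tele A B hAB.le).symm
    have h2 : ∑ i ∈ Finset.Ioc A B, (f i - f (i - 1)) ≥
        ∑ i ∈ Finset.Ioc A B, (D + (c i : ℝ)) :=
      Finset.sum_le_sum keyi
    have h3 : ∑ i ∈ Finset.Ioc A B, (D + (c i : ℝ)) =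
        (k : ℝ) * D + ∑ i ∈ Finset.Ioc A B, (c i : ℝ) := by
      rw [Finset.sum_add_distrib, Finset.sum_const, Nat.card_Ioc]
      rw [hk]
      push_cast
      ring
    have h4 : ∑ i ∈ Finset.Ioc A B, (c i : ℝ) ≥ (c (A + 1) : ℝ) := by
      apply Finset.single_le_sum (f := fun i => (c i : ℝ))
      · intro i _; positivity
      · simp only [Finset.mem_Ioc]; omega
    have h5 : c (A + 1) = k - s := by
      rw [hc]
      simp only
      rw [Finset.filter_true_of_mem, hcard]
      intro j hj
      have hji := hS hj
      simp only [Finset.mem_Ioc] at hji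
      omega
    have h6 : ((k - s : ℕ) : ℝ) = (k : ℝ) - s := by
      push_cast [Nat.cast_sub hs]
      ring
    rw [h1]
    rw [h5, h6] at h4
    linarith
  -- upper bound on f C - f B
  have hCB : f C - f B ≤ (ℓ : ℝ) * D := by
    have h1 : f C - f B = ∑ i ∈ Finset.Ioc B C, (f i - f (i - 1)) :=
      (tele B C hBC.le).symm
    have h2 : ∑ i ∈ Finset.Ioc B C, (f i - f (i - 1)) ≤
        ∑ i ∈ Finset.Ioc B C, D := by
      apply Finset.sum_le_sum
      intro i hi
      simp only [Finset.mem_Ioc] at hi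
      exact up i (by omega) (by omega)
    have h3 : ∑ i ∈ Finset.Ioc B C, D = (ℓ : ℝ) * D := by
      rw [Finset.sum_const, Nat.card_Ioc, hℓ]
      push_cast
      ring
    rw [h1]
    linarith
  have hkpos : (0 : ℝ) < k := by
    have : 0 < k := by omega
    exact_mod_cast this
  have hℓpos : (0 : ℝ) < ℓ := by
    have : 0 < ℓ := by omega
    exact_mod_cast this
  have hL : (f C - f B) / ℓ ≤ D := by
    rw [div_le_iff₀ hℓpos]
    linarith
  have hR : D + ((k : ℝ) - s) / k ≤ (f B - f A) / k := by
    rw [le_div_iff₀ hkpos, add_mul, div_mul_cancel₀ _ (ne_of_gt hkpos)]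
    linarith
  linarith
end

section
/- Let f: [0,∞)² → ℝ satisfy: (i) f is concave separately in each coordinate, i.e., for fixed v the map u ↦ f(u,v) is concave and for fixed u the map v ↦ f(u,v) is concave; and (ii) f is submodular: f(u₁,v₂) + f(u₂,v₁) ≥ f(u₁,v₁) + f(u₂,v₂) whenever 0 ≤ u₁ ≤ u₂ and 0 ≤ v₁ ≤ v₂. Then f is concave along any positive direction: for 0 ≤ u₁ ≤ u₂, 0 ≤ v₁ ≤ v₂, and t ∈ [0,1], f(t·u₁ + (1-t)·u₂, t·v₁ + (1-t)·v₂) ≥ t·f(u₁,v₁) + (1-t)·f(u₂,v₂). -/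
/-- Proposition a1: separate concavity plus submodularity implies concavity
along any positive direction, on the non-negative quadrant. -/
theorem stmt_7 (f : ℝ → ℝ → ℝ)
    (hconcx : ∀ v : ℝ, 0 ≤ v → ∀ u₁ u₂ t : ℝ, 0 ≤ u₁ → 0 ≤ u₂ →
      0 ≤ t → t ≤ 1 →
      f (t * u₁ + (1 - t) * u₂) v ≥ t * f u₁ v + (1 - t) * f u₂ v)
    (hconcy : ∀ u : ℝ, 0 ≤ u → ∀ v₁ v₂ t : ℝ, 0 ≤ v₁ → 0 ≤ v₂ →
      0 ≤ t → t ≤ 1 →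
      f u (t * v₁ + (1 - t) * v₂) ≥ t * f u v₁ + (1 - t) * f u v₂)
    (hsub : ∀ u₁ u₂ v₁ v₂ : ℝ, 0 ≤ u₁ → u₁ ≤ u₂ → 0 ≤ v₁ → v₁ ≤ v₂ →
      f u₁ v₂ + f u₂ v₁ ≥ f u₁ v₁ + f u₂ v₂) :
    ∀ u₁ u₂ v₁ v₂ t : ℝ, 0 ≤ u₁ → u₁ ≤ u₂ → 0 ≤ v₁ → v₁ ≤ v₂ →
      0 ≤ t → t ≤ 1 →
      f (t * u₁ + (1 - t) * u₂) (t * v₁ + (1 - t) * v₂) ≥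
        t * f u₁ v₁ + (1 - t) * f u₂ v₂ := by
  intro u₁ u₂ v₁ v₂ t hu₁ hu hv₁ hv ht ht1
  have hu₂ : 0 ≤ u₂ := hu₁.trans hu
  have hv₂ : 0 ≤ v₂ := hv₁.trans hv
  have hvmix : 0 ≤ t * v₁ + (1 - t) * v₂ := add_nonneg (mul_nonneg ht hv₁) (mul_nonneg (by linarith) hv₂)
  have h1 := hconcx (t * v₁ + (1 - t) * v₂) hvmix u₁ u₂ t hu₁ hu₂ ht ht1
  have h2 := hconcy u₁ hu₁ v₁ v₂ t hv₁ hv₂ ht ht1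
  have h3 := hconcy u₂ hu₂ v₁ v₂ t hv₁ hv₂ ht ht1
  have h4 := hsub u₁ u₂ v₁ v₂ hu₁ hu hv₁ hv
  nlinarith [mul_nonneg ht (sub_nonneg.2 ht1), mul_nonneg (mul_nonneg ht (sub_nonneg.2 ht1)) (sub_nonneg.2 h4)]
end

section
/- Let (M, f) be a polymatroid (f normalized, monotone, submodular on subsets of a finite set M). For subsets I, J define the modular defect δ(I,J) = f(I) + f(J) - f(I∪J) - f(I∩J) ≥ 0. For the Ingleton expression Ing(a,b,c,d) = -f(a)-f(b)-f(cd)-f(abc)-f(abd)+f(ab)+f(ac)+f(ad)+f(bc)+f(bd) (on four elements a,b,c,d of M), the identity Ing(a,b,c,d) + f(a) + f(c) - f(ac) = δ(ab,bc) + δ(ad,bd) + δ(c,d) holds; in particular, for every polymatroid Ing(a,b,c,d) + f(a) + f(c) - f(ac) ≥ 0. -/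
/-- First polymatroid inequality of Section 2.2:
`Ing(a,b,c,d) + f(a) + f(c) - f(ac) = δ(ab,bc) + δ(ad,bd) + δ(c,d) ≥ 0`. -/
theorem stmt_15 {α : Type*} [DecidableEq α] (f : Finset α → ℝ)
    (hnorm : f ∅ = 0)
    (hmono : ∀ I J : Finset α, I ⊆ J → f I ≤ f J)
    (hsub : ∀ I J : Finset α, f I + f J ≥ f (I ∪ J) + f (I ∩ J))
    (a b c d : α) (hab : a ≠ b) (hac : a ≠ c) (had : a ≠ d)
    (hbc : b ≠ c) (hbd : b ≠ d) (hcd : c ≠ d) :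
    (-f {a} - f {b} - f {c, d} - f {a, b, c} - f {a, b, d}
      + f {a, b} + f {a, c} + f {a, d} + f {b, c} + f {b, d})
      + f {a} + f {c} - f {a, c}
    = (f {a, b} + f {b, c} - f {a, b, c} - f {b})
      + (f {a, d} + f {b, d} - f {a, b, d} - f {d})
      + (f {c} + f {d} - f {c, d} - f ∅)
    ∧
    (-f {a} - f {b} - f {c, d} - f {a, b, c} - f {a, b, d}
      + f {a, b} + f {a, c} + f {a, d} + f {b, c} + f {b, d})
      + f {a} + f {c} - f {a, c} ≥ 0 := by
  have u1 : ({a, b} : Finset α) ∪ {b, c} = {a, b, c} := by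
    ext x; simp [or_assoc]
  have i1 : ({a, b} : Finset α) ∩ {b, c} = {b} := by
    ext x
    simp only [Finset.mem_inter, Finset.mem_insert, Finset.mem_singleton]
    constructor
    · rintro ⟨h1 | h1, h2 | h2⟩ <;> simp_all
    · rintro rfl; tauto
  have u2 : ({a, d} : Finset α) ∪ {b, d} = {a, b, d} := by
    ext x; simp; tauto
  have i2 : ({a, d} : Finset α) ∩ {b, d} = {d} := by
    ext x
    simp only [Finset.mem_inter, Finset.mem_insert, Finset.mem_singleton]
    constructor
    · rintro ⟨h1 | h1, h2 | h2⟩ <;> simp_all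
    · rintro rfl; tauto
  have u3 : ({c} : Finset α) ∪ {d} = {c, d} := by ext x; simp
  have i3 : ({c} : Finset α) ∩ {d} = ∅ := by
    ext x; simp; rintro rfl; exact hcd
  have h1 := hsub {a, b} {b, c}
  have h2 := hsub {a, d} {b, d}
  have h3 := hsub {c} {d}
  rw [u1, i1] at h1
  rw [u2, i2] at h2
  rw [u3, i3] at h3
  constructor
  · rw [hnorm]; ring
  · linarith
end

section
/- Let f be a polymatroid rank function on subsets of a set containing elements a, b, c, d. Then Ing(a,b,c,d) ≥ f(a) - f(ac) and Ing(a,b,c,d) ≥ f(c) - f(ac), where Ing(a,b,c,d) = -f(a)-f(b)-f(cd)-f(abc)-f(abd)+f(ab)+f(ac)+f(ad)+f(bc)+f(bd). -/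
/-- Second and third polymatroid inequalities of Section 2.2:
`Ing(a,b,c,d) ≥ f(a) - f(ac)` and `Ing(a,b,c,d) ≥ f(c) - f(ac)`. -/
theorem stmt_16 {α : Type*} [DecidableEq α] (f : Finset α → ℝ)
    (hnorm : f ∅ = 0)
    (hmono : ∀ I J : Finset α, I ⊆ J → f I ≤ f J)
    (hsub : ∀ I J : Finset α, f I + f J ≥ f (I ∪ J) + f (I ∩ J))
    (a b c d : α) (hab : a ≠ b) (hac : a ≠ c) (had : a ≠ d)
    (hbc : b ≠ c) (hbd : b ≠ d) (hcd : c ≠ d) :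
    (-f {a} - f {b} - f {c, d} - f {a, b, c} - f {a, b, d}
      + f {a, b} + f {a, c} + f {a, d} + f {b, c} + f {b, d})
      ≥ f {a} - f {a, c}
    ∧
    (-f {a} - f {b} - f {c, d} - f {a, b, c} - f {a, b, d}
      + f {a, b} + f {a, c} + f {a, d} + f {b, c} + f {b, d})
      ≥ f {c} - f {a, c} := by
  have e1 : ({a,b} ∪ {a,c} : Finset α) = {a,b,c} := by
    ext x; simp only [Finset.mem_union, Finset.mem_insert, Finset.mem_singleton]; tauto
  have e1' : ({a,b} ∩ {a,c} : Finset α) = {a} := by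
    ext x
    simp only [Finset.mem_inter, Finset.mem_insert, Finset.mem_singleton]
    constructor
    · rintro ⟨rfl | rfl, h⟩ <;> tauto
    · rintro rfl; tauto
  have e2 : ({a,c} ∪ {a,d} : Finset α) = {a,c,d} := by
    ext x; simp only [Finset.mem_union, Finset.mem_insert, Finset.mem_singleton]; tauto
  have e2' : ({a,c} ∩ {a,d} : Finset α) = {a} := by
    ext x
    simp only [Finset.mem_inter, Finset.mem_insert, Finset.mem_singleton]
    constructor
    · rintro ⟨rfl | rfl, h⟩ <;> tauto
    · rintro rfl; tauto
  have e3 : ({b,c} ∪ {b,d} : Finset α) = {b,c,d} := by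
    ext x; simp only [Finset.mem_union, Finset.mem_insert, Finset.mem_singleton]; tauto
  have e3' : ({b,c} ∩ {b,d} : Finset α) = {b} := by
    ext x
    simp only [Finset.mem_inter, Finset.mem_insert, Finset.mem_singleton]
    constructor
    · rintro ⟨rfl | rfl, h⟩ <;> tauto
    · rintro rfl; tauto
  have e4 : ({a,c,d} ∪ {b,c,d} : Finset α) = {a,b,c,d} := by
    ext x; simp only [Finset.mem_union, Finset.mem_insert, Finset.mem_singleton]; tauto
  have e4' : ({a,c,d} ∩ {b,c,d} : Finset α) = {c,d} := by
    ext x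
    simp only [Finset.mem_inter, Finset.mem_insert, Finset.mem_singleton]
    constructor
    · rintro ⟨rfl | rfl | rfl, h⟩ <;> tauto
    · rintro (rfl | rfl) <;> tauto
  have e5 : ({a,c} ∪ {b,c} : Finset α) = {a,b,c} := by
    ext x; simp only [Finset.mem_union, Finset.mem_insert, Finset.mem_singleton]; tauto
  have e5' : ({a,c} ∩ {b,c} : Finset α) = {c} := by
    ext x
    simp only [Finset.mem_inter, Finset.mem_insert, Finset.mem_singleton]
    constructor
    · rintro ⟨rfl | rfl, h⟩ <;> tauto
    · rintro rfl; tauto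
  have e6 : ({a,b} ∪ {b,d} : Finset α) = {a,b,d} := by
    ext x; simp only [Finset.mem_union, Finset.mem_insert, Finset.mem_singleton]; tauto
  have e6' : ({a,b} ∩ {b,d} : Finset α) = {b} := by
    ext x
    simp only [Finset.mem_inter, Finset.mem_insert, Finset.mem_singleton]
    constructor
    · rintro ⟨rfl | rfl, h⟩ <;> tauto
    · rintro rfl; tauto
  have h1 := hsub {a,b} {a,c}
  rw [e1, e1'] at h1
  have h2 := hsub {a,c} {a,d}
  rw [e2, e2'] at h2
  have h3 := hsub {b,c} {b,d}
  rw [e3, e3'] at h3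
  have h4 := hsub {a,c,d} {b,c,d}
  rw [e4, e4'] at h4
  have h5 := hsub {a,c} {b,c}
  rw [e5, e5'] at h5
  have h6 := hsub {a,b} {b,d}
  rw [e6, e6'] at h6
  have m1 : f {a,b,d} ≤ f {a,b,c,d} := by
    apply hmono; intro x; simp; tauto
  have m2 : f {c,d} ≤ f {a,c,d} := by
    apply hmono; intro x; simp; tauto
  constructor
  · linarith
  · linarith
end

section
/- Let α: [0,b] → ℝ be a strictly decreasing differentiable function with α(0) = a > 0 and α(b) = 0. Let f: [0,∞)² → ℝ be a continuous bipartite rank function (pointed, non-decreasing, separately concave, submodular) such that at every internal boundary point (u, α(u)) with 0 < u < b, the one-sided partial derivatives satisfy f_x⁻(u,α(u)) ≥ 1 + f_x⁺(u,α(u)) and f_y⁻(u,α(u)) ≥ 1 + f_y⁺(u,α(u)). Then f_x⁺(0,0) ≥ sup { -α'(v) : 0 < v < b }. -/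
open Filter Set

private lemma conc_key (g : ℝ → ℝ)
    (hconc : ∀ y₁ y₂ t : ℝ, 0 ≤ y₁ → 0 ≤ y₂ → 0 ≤ t → t ≤ 1 →
      g (t * y₁ + (1 - t) * y₂) ≥ t * g y₁ + (1 - t) * g y₂)
    {A B C : ℝ} (hA : 0 ≤ A) (hAB : A < B) (hBC : B < C) :
    (C - B) * g A + (B - A) * g C ≤ (C - A) * g B := by
  have hCA : (0:ℝ) < C - A := by linarith
  have hC : (0:ℝ) ≤ C := by linarith
  have ht0 : (0:ℝ) ≤ (C - B)/(C - A) := div_nonneg (by linarith) hCA.le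
  have ht1 : (C - B)/(C - A) ≤ 1 := (div_le_one hCA).mpr (by linarith)
  have harg : (C - B)/(C - A) * A + (1 - (C - B)/(C - A)) * C = B := by
    field_simp
    ring
  have h := hconc A C ((C - B)/(C - A)) hA hC ht0 ht1
  rw [harg] at h
  have h2 := mul_le_mul_of_nonneg_left h hCA.le
  have h3 : (C - A) * ((C - B) / (C - A) * g A + (1 - (C - B) / (C - A)) * g C)
      = (C - B) * g A + (B - A) * g C := by
    field_simp
    ring
  rw [h3] at h2
  exact h2

private lemma conc_slope_left (g : ℝ → ℝ)
    (hconc : ∀ y₁ y₂ t : ℝ, 0 ≤ y₁ → 0 ≤ y₂ → 0 ≤ t → t ≤ 1 →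
      g (t * y₁ + (1 - t) * y₂) ≥ t * g y₁ + (1 - t) * g y₂)
    {A B C : ℝ} (hA : 0 ≤ A) (hAB : A < B) (hBC : B < C) :
    (g C - g A)/(C - A) ≤ (g B - g A)/(B - A) := by
  rw [div_le_div_iff₀ (by linarith) (by linarith)]
  nlinarith [conc_key g hconc hA hAB hBC]

private lemma conc_slope_right (g : ℝ → ℝ)
    (hconc : ∀ y₁ y₂ t : ℝ, 0 ≤ y₁ → 0 ≤ y₂ → 0 ≤ t → t ≤ 1 →
      g (t * y₁ + (1 - t) * y₂) ≥ t * g y₁ + (1 - t) * g y₂)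
    {A B C : ℝ} (hA : 0 ≤ A) (hAB : A < B) (hBC : B < C) :
    (g C - g B)/(C - B) ≤ (g C - g A)/(C - A) := by
  rw [div_le_div_iff₀ (by linarith) (by linarith)]
  nlinarith [conc_key g hconc hA hAB hBC]

/-- Lemma (cont1): for a continuous bipartite rank function realizing the
access structure with boundary curve `α` (one-sided partial derivatives drop by
at least 1 across the boundary), the right `x`-derivative at the origin is at
least `sup { -α'(v) : 0 < v < b }`. -/
theorem stmt_18 (a b : ℝ) (ha : 0 < a) (hb : 0 < b)
    (α : ℝ → ℝ) (hα0 : α 0 = a) (hαb : α b = 0)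
    (hanti : StrictAntiOn α (Icc 0 b))
    (hdiff : ∀ v ∈ Icc (0 : ℝ) b, DifferentiableAt ℝ α v)
    (f : ℝ → ℝ → ℝ) (hpt : f 0 0 = 0)
    (hmono : ∀ u₁ u₂ v₁ v₂ : ℝ, 0 ≤ u₁ → u₁ ≤ u₂ → 0 ≤ v₁ → v₁ ≤ v₂ →
      f u₁ v₁ ≤ f u₂ v₂)
    (hconcx : ∀ v : ℝ, 0 ≤ v → ∀ u₁ u₂ t : ℝ, 0 ≤ u₁ → 0 ≤ u₂ → 0 ≤ t → t ≤ 1 →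
      f (t * u₁ + (1 - t) * u₂) v ≥ t * f u₁ v + (1 - t) * f u₂ v)
    (hconcy : ∀ u : ℝ, 0 ≤ u → ∀ v₁ v₂ t : ℝ, 0 ≤ v₁ → 0 ≤ v₂ → 0 ≤ t → t ≤ 1 →
      f u (t * v₁ + (1 - t) * v₂) ≥ t * f u v₁ + (1 - t) * f u v₂)
    (hsub : ∀ u₁ u₂ v₁ v₂ : ℝ, 0 ≤ u₁ → u₁ ≤ u₂ → 0 ≤ v₁ → v₁ ≤ v₂ →
      f u₁ v₂ + f u₂ v₁ ≥ f u₁ v₁ + f u₂ v₂)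
    -- one-sided partial derivatives of `f`
    (fxp fxm fyp fym : ℝ → ℝ → ℝ)
    (hfxp : ∀ u v : ℝ, 0 ≤ u → 0 ≤ v →
      Tendsto (fun h : ℝ => (f (u + h) v - f u v) / h)
        (nhdsWithin 0 (Ioi 0)) (nhds (fxp u v)))
    (hfxm : ∀ u v : ℝ, 0 < u → 0 ≤ v →
      Tendsto (fun h : ℝ => (f (u + h) v - f u v) / h)
        (nhdsWithin 0 (Iio 0)) (nhds (fxm u v)))
    (hfyp : ∀ u v : ℝ, 0 ≤ u → 0 ≤ v →
      Tendsto (fun h : ℝ => (f u (v + h) - f u v) / h)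
        (nhdsWithin 0 (Ioi 0)) (nhds (fyp u v)))
    (hfym : ∀ u v : ℝ, 0 ≤ u → 0 < v →
      Tendsto (fun h : ℝ => (f u (v + h) - f u v) / h)
        (nhdsWithin 0 (Iio 0)) (nhds (fym u v)))
    -- realization: across every internal boundary point both one-sided
    -- partial derivatives drop by at least 1
    (hreal : ∀ u : ℝ, 0 < u → u < b →
      fxm u (α u) ≥ 1 + fxp u (α u) ∧ fym u (α u) ≥ 1 + fyp u (α u)) :
    ∀ v : ℝ, 0 < v → v < b → fxp 0 0 ≥ -(deriv α v) := by

  intro v hv0 hvb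
  have hvb' : v ∈ Icc (0:ℝ) b := ⟨hv0.le, hvb.le⟩
  have hαv : 0 < α v := by
    have := hanti hvb' ⟨hb.le, le_refl b⟩ hvb
    rw [hαb] at this; linarith
  set p := fxp 0 0 with hpdef
  -- concavity of the sections
  have hconx0 : ∀ y₁ y₂ t : ℝ, 0 ≤ y₁ → 0 ≤ y₂ → 0 ≤ t → t ≤ 1 →
      (fun x => f x 0) (t * y₁ + (1 - t) * y₂) ≥ t * (fun x => f x 0) y₁ + (1 - t) * (fun x => f x 0) y₂ :=
    fun y₁ y₂ t h1 h2 h3 h4 => hconcx 0 le_rfl y₁ y₂ t h1 h2 h3 h4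
  have hcony : ∀ x : ℝ, 0 ≤ x → ∀ y₁ y₂ t : ℝ, 0 ≤ y₁ → 0 ≤ y₂ → 0 ≤ t → t ≤ 1 →
      (fun z => f x z) (t * y₁ + (1 - t) * y₂) ≥ t * (fun z => f x z) y₁ + (1 - t) * (fun z => f x z) y₂ :=
    fun x hx y₁ y₂ t h1 h2 h3 h4 => hconcy x hx y₁ y₂ t h1 h2 h3 h4
  -- p ≥ 0
  have hp0 : (0:ℝ) ≤ p := by
    refine ge_of_tendsto (hfxp 0 0 le_rfl le_rfl) ?_
    filter_upwards [self_mem_nhdsWithin] with h hh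
    have hh' : 0 < h := mem_Ioi.mp hh
    have : f 0 0 ≤ f (0 + h) 0 := hmono 0 (0 + h) 0 0 le_rfl (by linarith) le_rfl le_rfl
    exact div_nonneg (by linarith) hh'.le
  -- the slope at the origin bounds everything
  have slope_le_p : ∀ w : ℝ, 0 < w → (f w 0 - f 0 0) / w ≤ p := by
    intro w hw
    refine ge_of_tendsto (hfxp 0 0 le_rfl le_rfl) ?_
    filter_upwards [Ioo_mem_nhdsGT_of_mem (Set.left_mem_Ico.mpr hw)] with h hh
    have key := conc_slope_left (fun x => f x 0) hconx0 (le_refl 0) hh.1 hh.2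
    simpa using key
  -- master inequality : any horizontal increment has slope at most p
  have master : ∀ u w y : ℝ, 0 ≤ u → u < w → 0 ≤ y → f w y - f u y ≤ p * (w - u) := by
    intro u w y hu huw hy
    have h1 : f w y - f u y ≤ f w 0 - f u 0 := by
      have := hsub u w 0 y hu huw.le le_rfl hy
      linarith
    have h2 : (f w 0 - f u 0)/(w - u) ≤ p := by
      rcases eq_or_lt_of_le hu with h0 | h0
      · rw [← h0]
        simpa using slope_le_p w (by linarith)
      · calc (f w 0 - f u 0)/(w - u) ≤ (f w 0 - f 0 0)/(w - 0) :=
              conc_slope_right (fun x => f x 0) hconx0 (le_refl 0) h0 huw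
          _ ≤ p := by simpa using slope_le_p w (by linarith)
    have := (div_le_iff₀ (by linarith : (0:ℝ) < w - u)).mp h2
    linarith
  -- upper right y-derivative bounds slopes to the right
  have fyp_ge_slope : ∀ x y Y : ℝ, 0 ≤ x → 0 ≤ y → y < Y →
      (f x Y - f x y) / (Y - y) ≤ fyp x y := by
    intro x y Y hx hy hyY
    refine ge_of_tendsto (hfyp x y hx hy) ?_
    filter_upwards [Ioo_mem_nhdsGT_of_mem
      (Set.left_mem_Ico.mpr (by linarith : (0:ℝ) < Y - y))] with h hh
    have key := conc_slope_left (fun z => f x z) (hcony x hx) hy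
      (by linarith [hh.1] : y < y + h) (by linarith [hh.2] : y + h < Y)
    simpa using key
  -- lower left y-derivative is below slopes from the left
  have fym_le_slope : ∀ x y Y : ℝ, 0 ≤ x → 0 ≤ y → y < Y →
      fym x Y ≤ (f x Y - f x y) / (Y - y) := by
    intro x y Y hx hy hyY
    refine le_of_tendsto (hfym x Y hx (by linarith)) ?_
    filter_upwards [Ioo_mem_nhdsLT_of_mem (⟨by linarith, le_rfl⟩ : (0:ℝ) ∈ Ioc (y - Y) 0)] with h hh
    have key := conc_slope_right (fun z => f x z) (hcony x hx) hy
      (by linarith [hh.1] : y < Y + h) (by linarith [hh.2] : Y + h < Y)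
    have heq : (f x (Y + h) - f x Y)/h = (f x Y - f x (Y + h))/(Y - (Y + h)) := by
      rw [show Y - (Y + h) = -h by ring, div_neg, ← neg_div, neg_sub]
    rw [heq]
    exact key
  -- submodularity : fyp is antitone in the first variable
  have fyp_anti : ∀ x w y : ℝ, 0 ≤ x → x ≤ w → 0 ≤ y → fyp w y ≤ fyp x y := by
    intro x w y hx hxw hy
    refine le_of_tendsto_of_tendsto (hfyp w y (hx.trans hxw) hy) (hfyp x y hx hy) ?_
    filter_upwards [self_mem_nhdsWithin] with h hh
    have hh' : 0 < h := mem_Ioi.mp hh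
    have hnum : f w (y + h) - f w y ≤ f x (y + h) - f x y := by
      have := hsub x w y (y + h) hx hxw hy (by linarith)
      linarith
    exact div_le_div_of_nonneg_right hnum hh'.le
  -- main argument
  rcases le_or_gt (-(deriv α v)) 0 with hcneg | hc
  · exact le_trans hcneg hp0
  set c := -(deriv α v) with hcdef
  refine le_of_forall_pos_le_add ?_
  intro η hη
  set Qv := fyp v (α v) with hQvdef
  set η₁ := min (η/2) (c/2) with hη₁def
  set η₂ := min 1 (η/(2*c)) with hη₂def
  have hη₁0 : 0 < η₁ := lt_min (by linarith) (by linarith)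
  have hη₂0 : 0 < η₂ := lt_min one_pos (by positivity)
  have hη₁le : η₁ ≤ η/2 := min_le_left _ _
  have hη₁c : η₁ ≤ c/2 := min_le_right _ _
  have hη₂le1 : η₂ ≤ 1 := min_le_left _ _
  have hcη₂ : c * η₂ ≤ η/2 := by
    have h1 : η₂ ≤ η/(2*c) := min_le_right _ _
    have h2 : c * η₂ ≤ c * (η/(2*c)) := mul_le_mul_of_nonneg_left h1 hc.le
    have h3 : c * (η/(2*c)) = η/2 := by
      field_simp
    linarith
  -- choose h₀ with a good slope above α v
  obtain ⟨h₀, hh₀slope, hh₀mem⟩ :=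
    (((hfyp v (α v) hv0.le hαv.le).eventually
      (eventually_gt_nhds (by linarith : Qv - η₂/2 < Qv))).and
      eventually_mem_nhdsWithin).exists
  have hh₀ : 0 < h₀ := mem_Ioi.mp hh₀mem
  set Y := α v + h₀ with hYdef
  -- pick u close to v from the left
  have hder : HasDerivAt α (deriv α v) v := (hdiff v hvb').hasDerivAt
  have hslopeT : Tendsto (fun u => (α u - α v)/(v - u)) (nhdsWithin v (Iio v)) (nhds c) := by
    have h1 := hasDerivAt_iff_tendsto_slope.mp hder
    have h2 : Tendsto (slope α v) (nhdsWithin v (Iio v)) (nhds (deriv α v)) :=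
      h1.mono_left (nhdsWithin_mono v (fun x hx => ne_of_lt hx))
    refine (h2.neg).congr ?_
    intro u
    rw [slope_def_field, show v - u = -(u - v) from by ring, div_neg]
  have E1 : ∀ᶠ u in nhdsWithin v (Iio v), c - η₁ < (α u - α v)/(v - u) :=
    hslopeT.eventually (eventually_gt_nhds (by linarith : c - η₁ < c))
  have E2 : ∀ᶠ u in nhdsWithin v (Iio v), α u < α v + h₀/2 :=
    (((hdiff v hvb').continuousAt.tendsto).mono_left nhdsWithin_le_nhds).eventually
      (eventually_lt_nhds (by linarith : α v < α v + h₀/2))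
  have E3 : ∀ᶠ u in nhdsWithin v (Iio v), 0 < u :=
    ((eventually_gt_nhds hv0).filter_mono nhdsWithin_le_nhds)
  have E4 : ∀ᶠ u in nhdsWithin v (Iio v), u ∈ Iio v := eventually_mem_nhdsWithin
  obtain ⟨u, hu1, hu2, hu3, hu4⟩ := (E1.and (E2.and (E3.and E4))).exists
  have huv : u < v := hu4
  have hub : u < b := lt_trans huv hvb
  have hαu : α v < α u := hanti ⟨hu3.le, hub.le⟩ hvb' huv
  have hαu0 : 0 ≤ α u := by linarith
  have hδ : (0:ℝ) < v - u := by linarith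
  have he : (0:ℝ) < α u - α v := by linarith
  have heh₀ : α u - α v < h₀/2 := by linarith
  have hYαu : α u < Y := by rw [hYdef]; linarith
  -- the chain of inequalities
  have P1 : f v (α v) - f u (α v) ≤ p * (v - u) := master u v (α v) hu3.le huv hαv.le
  have P2 : (1 + fyp u (α u)) * (α u - α v) ≤ f u (α u) - f u (α v) := by
    have s1 : fym u (α u) ≤ (f u (α u) - f u (α v))/(α u - α v) :=
      fym_le_slope u (α v) (α u) hu3.le hαv.le hαu
    have s2 : 1 + fyp u (α u) ≤ fym u (α u) := (hreal u hu3 hub).2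
    exact (le_div_iff₀ he).mp (s2.trans s1)
  have P3 : f v (α u) - f v (α v) ≤ Qv * (α u - α v) := by
    have := fyp_ge_slope v (α v) (α u) hv0.le hαv.le hαu
    exact (div_le_iff₀ he).mp this
  have P4 : f u (α u) ≤ f v (α u) := hmono u v (α u) (α u) hu3.le huv.le hαu0 le_rfl
  -- p bounds the combination
  have hp_ge : (α u - α v)/(v - u) * (1 + fyp u (α u) - Qv) ≤ p := by
    rw [div_mul_eq_mul_div, div_le_iff₀ hδ]
    nlinarith [P1, P2, P3, P4]
  -- fyp u (α u) is nearly Qv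
  have hD : Qv - η₂ ≤ fyp u (α u) := by
    have f1 : fyp v (α u) ≤ fyp u (α u) := fyp_anti u v (α u) hu3.le huv.le hαu0
    have f2 : (f v Y - f v (α u))/(Y - α u) ≤ fyp v (α u) :=
      fyp_ge_slope v (α u) Y hv0.le hαu0 hYαu
    have f4 : (Qv - η₂/2) * h₀ ≤ f v Y - f v (α v) := by
      have := (lt_div_iff₀ hh₀).mp hh₀slope
      linarith
    have hYαu' : (0:ℝ) < Y - α u := by linarith
    have f5 : Qv - η₂ ≤ (f v Y - f v (α u))/(Y - α u) := by
      rw [le_div_iff₀ hYαu']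
      have hk1 : η₂ * (α u - α v) ≤ η₂ * (h₀/2) :=
        mul_le_mul_of_nonneg_left heh₀.le hη₂0.le
      have hexp : (Qv - η₂) * (Y - α u)
          = (Qv - η₂/2) * h₀ - Qv * (α u - α v) - (η₂ * (h₀/2) - η₂ * (α u - α v)) := by
        rw [hYdef]; ring
      rw [hexp]
      linarith [P3, f4]
    linarith [f5.trans (f2.trans f1)]
  -- final combination
  have h1D : (0:ℝ) ≤ 1 + fyp u (α u) - Qv := by linarith
  have hs : c - η₁ ≤ (α u - α v)/(v - u) := hu1.le
  have hcη₁ : (0:ℝ) ≤ c - η₁ := by linarith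
  have g2 : (c - η₁) * (1 + fyp u (α u) - Qv) ≤ (α u - α v)/(v - u) * (1 + fyp u (α u) - Qv) :=
    mul_le_mul_of_nonneg_right hs h1D
  have g3 : (c - η₁) * (1 + fyp u (α u) - Qv)
      = (c - η₁) + (c - η₁) * (fyp u (α u) - Qv) := by ring
  have g4 : (c - η₁) * (-η₂) ≤ (c - η₁) * (fyp u (α u) - Qv) :=
    mul_le_mul_of_nonneg_left (by linarith : -η₂ ≤ fyp u (α u) - Qv) hcη₁
  have g5 : (c - η₁) * (-η₂) = -(c * η₂) + η₁ * η₂ := by ring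
  have g6 : (0:ℝ) ≤ η₁ * η₂ := mul_nonneg hη₁0.le hη₂0.le
  clear_value p c Qv η₁ η₂ Y
  linarith [hp_ge, g2, g3, g4, g5, g6, hcη₂, hη₁le]
end
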